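/- arXiv:2410.03387 — 3 statements merged into one kernel-verified Lean document; each statement's English description precedes it below -/
import Mathlib

section
/- Let Ω ⊆ ℝ be finite, and let γ_1,...,γ_{a+1} be phantoms in Ω ∪ Ω²_C (pairs of contiguous elements of Ω ordered between their endpoints by ≤*), with at least one phantom equal to min Ω or the pair containing min Ω, and at least one equal to max Ω or the pair containing max Ω. Then every interior element of Ω (an element of Ω that is neither min Ω nor max Ω) is attained as the mixed median med(p, γ) for some vector of peaks p ∈ Ω^a. -/
/-- The ambient linearly ordered set `Ω ∪ Ω²_C`: singles `x` are encoded as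
`toLex (x, x)` and contiguous pairs `(x, y)` as `toLex (x, y)`; the lexicographic
order on `ℝ × ℝ` then restricts to the order `≤*`. -/
abbrev V : Type := Lex (ℝ × ℝ)

/-- Embedding of a single alternative into `Ω ∪ Ω²_C`. -/
def emb (x : ℝ) : V := toLex (x, x)

/-- A pair of contiguous alternatives as an element of `Ω ∪ Ω²_C`. -/
def pairV (x y : ℝ) : V := toLex (x, y)

/-- `(x, y)` is a pair of contiguous elements of `Ω`, i.e. `(x, y) ∈ Ω²_C`. -/
def IsContigPair (Ω : Finset ℝ) (x y : ℝ) : Prop :=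
  x ∈ Ω ∧ y ∈ Ω ∧ x < y ∧ ∀ z ∈ Ω, ¬(x < z ∧ z < y)

/-- `v` belongs to `Ω ∪ Ω²_C`. -/
def InDom (Ω : Finset ℝ) (v : V) : Prop :=
  (∃ z ∈ Ω, v = emb z) ∨ ∃ x y : ℝ, IsContigPair Ω x y ∧ v = pairV x y

/-- `m` is a median of the list `l` in a linear order. -/
def IsMedian {α : Type*} [LinearOrder α] (l : List α) (m : α) : Prop :=
  m ∈ l ∧ (l.length + 1) / 2 ≤ l.countP (fun b => decide (b ≤ m)) ∧
    (l.length + 1) / 2 ≤ l.countP (fun b => decide (m ≤ b))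


/-!
Put all `a` peaks at `z`. The phantom attached to `min Ω` lies strictly below `z` and the one
attached to `max Ω` lies at or above `z` (a pair `(x, max Ω)` has `z ≤ x` by contiguity), so each
side of `z` receives the `a` peaks plus one phantom, i.e. `a + 1` of the `2a + 1` entries.
When `a = 0` these two phantoms coincide, which is impossible.
-/

lemma add_one_le_countP_replicate_append {α : Type*} (a : ℕ) {m : α} {l : List α}
    {p : α → Bool} (hm : p m) (hl : ∃ b ∈ l, p b) :
    a + 1 ≤ (List.replicate a m ++ l).countP p := by
  rw [List.countP_append, List.countP_replicate, if_pos hm]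
  exact Nat.add_le_add_left (List.countP_pos_iff.mpr hl) a

lemma isMedian_replicate_append {α : Type*} [LinearOrder α] {a : ℕ} (ha : 0 < a) (m : α)
    {l : List α} (hl : l.length = a + 1) (hlo : ∃ b ∈ l, b ≤ m) (hhi : ∃ b ∈ l, m ≤ b) :
    IsMedian (List.replicate a m ++ l) m := by
  have hhalf : ((List.replicate a m ++ l).length + 1) / 2 = a + 1 := by
    simp only [List.length_append, List.length_replicate, hl]
    omega
  refine ⟨List.mem_append_left _ (List.mem_replicate.mpr ⟨ha.ne', rfl⟩), ?_, ?_⟩ <;> rw [hhalf]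
  · exact add_one_le_countP_replicate_append a (decide_eq_true le_rfl) (by simpa using hlo)
  · exact add_one_le_countP_replicate_append a (decide_eq_true le_rfl) (by simpa using hhi)

lemma emb_strictMono : StrictMono emb :=
  fun _ _ h => Prod.Lex.toLex_lt_toLex.mpr (Or.inl h)

lemma pairV_lt_emb {x y z : ℝ} (h : x < z) : pairV x y < emb z :=
  Prod.Lex.toLex_lt_toLex.mpr (Or.inl h)

lemma emb_le_pairV {x y z : ℝ} (hzx : z ≤ x) (hxy : x ≤ y) : emb z ≤ pairV x y := by
  rcases hzx.lt_or_eq with h | rfl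
  · exact Prod.Lex.toLex_le_toLex.mpr (Or.inl h)
  · exact Prod.Lex.toLex_le_toLex.mpr (Or.inr ⟨rfl, hxy⟩)

lemma IsContigPair.le_left {Ω : Finset ℝ} {x y z : ℝ} (h : IsContigPair Ω x y) (hz : z ∈ Ω)
    (hzy : z < y) : z ≤ x :=
  not_lt.mp fun hxz => h.2.2.2 z hz ⟨hxz, hzy⟩

theorem stmt9_general (Ω : Finset ℝ) (hne : Ω.Nonempty) (a : ℕ) (γ : Fin (a + 1) → V)
    (hmin : ∃ j, γ j = emb (Ω.min' hne) ∨
      ∃ y : ℝ, IsContigPair Ω (Ω.min' hne) y ∧ γ j = pairV (Ω.min' hne) y)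
    (hmax : ∃ j, γ j = emb (Ω.max' hne) ∨
      ∃ x : ℝ, IsContigPair Ω x (Ω.max' hne) ∧ γ j = pairV x (Ω.max' hne))
    (z : ℝ) (hz : z ∈ Ω) (hz1 : z ≠ Ω.min' hne) (hz2 : z ≠ Ω.max' hne) :
    ∃ p : Fin a → ℝ, (∀ i, p i ∈ Ω) ∧
      IsMedian ((List.ofFn fun i => emb (p i)) ++ List.ofFn γ) (emb z) := by
  have hzmin : Ω.min' hne < z := (Ω.min'_le z hz).lt_of_ne' hz1
  have hzmax : z < Ω.max' hne := (Ω.le_max' z hz).lt_of_ne hz2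
  obtain ⟨jlo, hjlo⟩ := hmin
  obtain ⟨jhi, hjhi⟩ := hmax
  have hlo : γ jlo < emb z := by
    rcases hjlo with h | ⟨y, -, h⟩ <;> rw [h]
    exacts [emb_strictMono hzmin, pairV_lt_emb hzmin]
  have hhi : emb z ≤ γ jhi := by
    rcases hjhi with h | ⟨x, hc, h⟩ <;> rw [h]
    exacts [(emb_strictMono hzmax).le, emb_le_pairV (hc.le_left hz hzmax) hc.2.2.1.le]
  rcases Nat.eq_zero_or_pos a with rfl | ha
  · exact ((hlo.trans_le hhi).ne (congrArg γ (Subsingleton.elim (α := Fin 1) jlo jhi))).elim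
  refine ⟨fun _ => z, fun _ => hz, ?_⟩
  rw [List.ofFn_const]
  exact isMedian_replicate_append ha (emb z) List.length_ofFn
    ⟨γ jlo, List.mem_ofFn.mpr ⟨jlo, rfl⟩, hlo.le⟩ ⟨γ jhi, List.mem_ofFn.mpr ⟨jhi, rfl⟩, hhi⟩

/-- With a phantom at (or at the pair containing) `min Ω` and one at (or at the
pair containing) `max Ω`, every interior element of `Ω` is attained as the mixed
median for some vector of peaks in `Ω`. -/
theorem stmt9 (Ω : Finset ℝ) (hne : Ω.Nonempty) (a : ℕ) (γ : Fin (a + 1) → V)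
    (hdom : ∀ j, InDom Ω (γ j))
    (hmin : ∃ j, γ j = emb (Ω.min' hne) ∨
      ∃ y : ℝ, IsContigPair Ω (Ω.min' hne) y ∧ γ j = pairV (Ω.min' hne) y)
    (hmax : ∃ j, γ j = emb (Ω.max' hne) ∨
      ∃ x : ℝ, IsContigPair Ω x (Ω.max' hne) ∧ γ j = pairV x (Ω.max' hne))
    (z : ℝ) (hz : z ∈ Ω) (hz1 : z ≠ Ω.min' hne) (hz2 : z ≠ Ω.max' hne) :
    ∃ p : Fin a → ℝ, (∀ i, p i ∈ Ω) ∧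
      IsMedian ((List.ofFn fun i => emb (p i)) ++ List.ofFn γ) (emb z) :=
  stmt9_general Ω hne a γ hmin hmax z hz hz1 hz2
end

section
/- For the mixed median function, the outcome equals a pair (x,y) ∈ Ω²_C at peak vector p if and only if the number of peaks ≤* (x,y) is at least (a+1) − M̲, where M̲ is the number of phantoms ≤* (x,y), and for every element β of Ω ∪ Ω²_C with β <* (x,y) the number of peaks ≤* β is strictly less than (a+1) minus the number of phantoms ≤* β. -/
/-! With `2a + 1` values, `m` is their median iff at least `a + 1` of them are `≤* m` and at
most `a` are `<* m`. The second count can be tested on the elements `β <* m` of the domain: the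
largest value below `m` is such a `β` and has exactly as many values `≤* β`. Splitting the counts
into peaks and phantoms, and bounding the phantom count by `a + 1`, turns both conditions into the
truncated differences of the statement. -/

theorem List.countP_ofFn {α : Type*} {k : ℕ} (f : Fin k → α) (q : α → Bool) :
    (List.ofFn f).countP q = (Finset.univ.filter fun i => q (f i)).card := by
  rw [Finset.card_filter]
  induction k with
  | zero => simp
  | succ k ih =>
    rw [List.ofFn_succ, List.countP_cons, ih, Fin.sum_univ_succ]
    simp [Nat.add_comm]

section LinearOrder

variable {α : Type*} [LinearOrder α] {l : List α} {m : α} {n : ℕ}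

theorem List.countP_lt_add_countP_ge (l : List α) (m : α) :
    l.countP (· < m) + l.countP (m ≤ ·) = l.length := by
  rw [List.length_eq_countP_add_countP (· < m)]
  congr 1
  exact List.countP_congr fun _ _ => by simp

theorem List.countP_le_le_countP_lt_of_notMem (hm : m ∉ l) :
    l.countP (· ≤ m) ≤ l.countP (· < m) :=
  List.countP_mono_left fun _ hb hbm =>
    decide_eq_true (lt_of_le_of_ne (of_decide_eq_true hbm) fun h => hm (h ▸ hb))

theorem isMedian_iff_of_length_eq (hl : l.length = 2 * n + 1) :
    IsMedian l m ↔ n + 1 ≤ l.countP (· ≤ m) ∧ l.countP (· < m) ≤ n := by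
  have hhalf : (l.length + 1) / 2 = n + 1 := by omega
  have hsplit := l.countP_lt_add_countP_ge m
  unfold IsMedian
  rw [hhalf]
  constructor
  · rintro ⟨-, hle, hge⟩
    exact ⟨hle, by omega⟩
  · rintro ⟨hle, hlt⟩
    refine ⟨?_, hle, by omega⟩
    -- otherwise only the `≤ n` entries below `m` would be `≤ m`
    by_contra hm
    have := List.countP_le_le_countP_lt_of_notMem hm
    omega

theorem List.countP_lt_le_iff_forall {P : α → Prop} (hP : ∀ b ∈ l, P b) :
    l.countP (· < m) ≤ n ↔ ∀ β, P β → β < m → l.countP (· ≤ β) ≤ n := by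
  constructor
  · intro h β _ hβm
    refine le_trans (List.countP_mono_left fun b _ hb => ?_) h
    exact decide_eq_true ((of_decide_eq_true hb).trans_lt hβm)
  · -- test the hypothesis at the largest entry below `m`
    intro h
    by_contra! hlt
    have hne : ((l.filter (· < m)).toFinset).Nonempty := by
      obtain ⟨b, hb⟩ := List.exists_mem_of_length_pos
        (List.countP_eq_length_filter ▸ (show 0 < l.countP (· < m) by omega))
      exact ⟨b, List.mem_toFinset.mpr hb⟩
    obtain ⟨β, hβ, hmax⟩ := Finset.exists_max_image _ id hne
    obtain ⟨hβl, hβm⟩ := List.mem_filter.mp (List.mem_toFinset.mp hβ)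
    have hcount : l.countP (· < m) ≤ l.countP (· ≤ β) :=
      List.countP_mono_left fun b hb hbm =>
        decide_eq_true (hmax b (List.mem_toFinset.mpr (List.mem_filter.mpr ⟨hb, hbm⟩)))
    have := h β (hP β hβl) (of_decide_eq_true hβm)
    omega

end LinearOrder

theorem stmt11_general (Ω : Finset ℝ) (a : ℕ) (γ : Fin (a + 1) → V)
    (hdom : ∀ j, InDom Ω (γ j))
    (x y : ℝ)
    (p : Fin a → ℝ) (hp : ∀ i, p i ∈ Ω) :
    IsMedian ((List.ofFn fun i => emb (p i)) ++ List.ofFn γ) (pairV x y) ↔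
      ((a + 1) - (Finset.univ.filter fun j => γ j ≤ pairV x y).card ≤
          (Finset.univ.filter fun i => emb (p i) ≤ pairV x y).card ∧
        ∀ β : V, InDom Ω β → β < pairV x y →
          (Finset.univ.filter fun i => emb (p i) ≤ β).card <
            (a + 1) - (Finset.univ.filter fun j => γ j ≤ β).card) := by
  set l := (List.ofFn fun i => emb (p i)) ++ List.ofFn γ
  have hcount (β : V) : l.countP (· ≤ β) =
      (Finset.univ.filter fun i => emb (p i) ≤ β).card +
        (Finset.univ.filter fun j => γ j ≤ β).card := by
    simp only [l, List.countP_append, List.countP_ofFn, decide_eq_true_eq]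
  have hphantoms (β : V) : (Finset.univ.filter fun j => γ j ≤ β).card ≤ a + 1 :=
    (Finset.card_filter_le _ _).trans_eq (Finset.card_fin _)
  have hdomain : ∀ b ∈ l, InDom Ω b := by
    simp only [l, List.mem_append, List.mem_ofFn]
    rintro b (⟨i, rfl⟩ | ⟨j, rfl⟩)
    exacts [Or.inl ⟨p i, hp i, rfl⟩, hdom j]
  rw [isMedian_iff_of_length_eq (n := a) (by simp only [l, List.length_append, List.length_ofFn]; ring), List.countP_lt_le_iff_forall hdomain]
  simp only [hcount]
  refine and_congr ?_ (forall₃_congr fun β _ _ => ?_)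
  · have := hphantoms (pairV x y)
    omega
  · have := hphantoms β
    omega

/-- Counting characterization of when the mixed median equals a pair
`(x, y) ∈ Ω²_C`: at least `(a+1) − M̲` peaks are `≤* (x,y)`, where `M̲` is the
number of phantoms `≤* (x,y)`, and for every `β ∈ Ω ∪ Ω²_C` with `β <* (x,y)`
the number of peaks `≤* β` is strictly less than `(a+1)` minus the number of
phantoms `≤* β`. -/
theorem stmt11 (Ω : Finset ℝ) (a : ℕ) (γ : Fin (a + 1) → V)
    (hdom : ∀ j, InDom Ω (γ j))
    (x y : ℝ) (hxy : IsContigPair Ω x y)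
    (p : Fin a → ℝ) (hp : ∀ i, p i ∈ Ω) :
    IsMedian ((List.ofFn fun i => emb (p i)) ++ List.ofFn γ) (pairV x y) ↔
      ((a + 1) - (Finset.univ.filter fun j => γ j ≤ pairV x y).card ≤
          (Finset.univ.filter fun i => emb (p i) ≤ pairV x y).card ∧
        ∀ β : V, InDom Ω β → β < pairV x y →
          (Finset.univ.filter fun i => emb (p i) ≤ β).card <
            (a + 1) - (Finset.univ.filter fun j => γ j ≤ β).card) :=
  stmt11_general Ω a γ hdom x y p hp
end

section
/- If a generalized median voter function ω is defined from a left coalition system L on r_ω with two consecutive elements x ∈ Ω and (x,y) ∈ Ω²_C (x <* (x,y)) satisfying L(x) = L(x,y), then ω never outputs the pair (x,y): for all peak vectors p ∈ Ω^a, ω(p) ≠ (x,y). -/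
/-! Peaks are singles, and no single lies strictly between `x` and `(x, y)` in `≤*`, so the
voters supporting `(x, y)` are exactly those supporting `x`. As `L(x) = L(x, y)`, the coalition
that makes `(x, y)` win already makes `x` win, and `x <* (x, y)` contradicts minimality. -/

theorem emb_le_pairV_iff {z x y : ℝ} (hxy : x ≤ y) : emb z ≤ pairV x y ↔ z ≤ x := by
  simp only [emb, pairV, Prod.Lex.toLex_le_toLex]
  constructor
  · rintro (h | ⟨h, -⟩) <;> order
  · intro h
    exact h.lt_or_eq.imp id fun h => ⟨h, h ▸ hxy⟩

theorem emb_le_emb_iff {z x : ℝ} : emb z ≤ emb x ↔ z ≤ x :=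
  emb_le_pairV_iff le_rfl

theorem emb_lt_pairV {x y : ℝ} (hxy : x < y) : emb x < pairV x y := by
  simp [emb, pairV, Prod.Lex.toLex_lt_toLex, hxy]

theorem filter_emb_le_pairV_eq {ι : Type*} [Fintype ι] (p : ι → ℝ) {x y : ℝ} (hxy : x ≤ y) :
    (Finset.univ.filter fun i => emb (p i) ≤ pairV x y) =
      Finset.univ.filter fun i => emb (p i) ≤ emb x := by
  simp only [emb_le_pairV_iff hxy, emb_le_emb_iff]

theorem stmt14_general (Ω : Finset ℝ) (a : ℕ) (rω : Set V)
    (L : V → Set (Finset (Fin a)))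
    (x y : ℝ) (hxy : IsContigPair Ω x y)
    (hx : emb x ∈ rω)
    (hL : L (emb x) = L (pairV x y))
    (p : Fin a → ℝ) :
    ¬(((Finset.univ.filter fun i => emb (p i) ≤ pairV x y) ∈ L (pairV x y)) ∧
      ∀ β ∈ rω, β < pairV x y →
        (Finset.univ.filter fun i => emb (p i) ≤ β) ∉ L β) := by
  rintro ⟨hwin, hleast⟩
  have hlt : x < y := hxy.2.2.1
  rw [← hL, filter_emb_le_pairV_eq p hlt.le] at hwin
  exact hleast (emb x) hx (emb_lt_pairV hlt) hwin

/-- If `x ∈ Ω` and the contiguous pair `(x, y)` have the same winning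
coalitions, `L(x) = L(x,y)`, then the generalized median voter function never
outputs the pair `(x, y)`: the pair is never the `≤*`-least element of `r_ω`
whose set of supporting peaks is winning. -/
theorem stmt14 (Ω : Finset ℝ) (a : ℕ) (rω : Set V)
    (L : V → Set (Finset (Fin a)))
    (hmono : ∀ (α β : V) (S : Finset (Fin a)), α ≤ β → S ∈ L α → S ∈ L β)
    (hsuper : ∀ (α : V) (S S' : Finset (Fin a)), S ∈ L α → S ⊆ S' → S' ∈ L α)
    (x y : ℝ) (hxy : IsContigPair Ω x y)
    (hx : emb x ∈ rω) (hpr : pairV x y ∈ rω)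
    (hL : L (emb x) = L (pairV x y))
    (p : Fin a → ℝ) (hp : ∀ i, p i ∈ Ω) :
    ¬(((Finset.univ.filter fun i => emb (p i) ≤ pairV x y) ∈ L (pairV x y)) ∧
      ∀ β ∈ rω, β < pairV x y →
        (Finset.univ.filter fun i => emb (p i) ≤ β) ∉ L β) :=
  stmt14_general Ω a rω L x y hxy hx hL p
end
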